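/- arXiv:2511.07642 — 3 statements merged into one kernel-verified Lean document; each statement's English description precedes it below -/
import Mathlib

section
/- Let X be a compact metric space and f : X → 2^X a transitive open set-valued map. Then f(X) ⊆ Ω(f); that is, every point in the image of f is recurrent (y ⇝ y). -/
open Metric Set

/-- n-fold relational composition: `fIter f 0 x = {x}`, `fIter f (n+1) x = ⋃ y ∈ fIter f n x, f y`. -/
def fIter {X : Type*} (f : X → Set X) : ℕ → X → Set X
  | 0, x => {x}
  | n + 1, x => ⋃ y ∈ fIter f n x, f y

/-- Image of a set under the n-fold composition. -/
def fIterS {X : Type*} (f : X → Set X) (n : ℕ) (A : Set X) : Set X :=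
  ⋃ a ∈ A, fIter f n a

/-- `x ⇝ y`: there is a finite trajectory of length ≥ 1 from `x` to `y`. -/
def Reach {X : Type*} (f : X → Set X) (x y : X) : Prop :=
  ∃ n, 1 ≤ n ∧ y ∈ fIter f n x

/-- The recurrent set `Ω(f)`. -/
def Omega {X : Type*} (f : X → Set X) : Set X := {x | Reach f x x}

/-- The final recurrent set `Ω_final(f)`. -/
def OmegaFinal {X : Type*} (f : X → Set X) : Set X :=
  {x | ∀ y, Reach f x y → Reach f y x}

/-- `f` is an open set-valued map: open graph and nonempty open connected values. -/
def IsOpenSVM {X : Type*} [TopologicalSpace X] (f : X → Set X) : Prop :=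
  IsOpen {p : X × X | p.2 ∈ f p.1} ∧ ∀ x, IsOpen (f x) ∧ IsConnected (f x)

/-- `f` is transitive. -/
def SVMTransitive {X : Type*} [TopologicalSpace X] (f : X → Set X) : Prop :=
  ∀ A B : Set X, IsOpen A → A.Nonempty → IsOpen B → B.Nonempty →
    ∃ n, 1 ≤ n ∧ (fIterS f n A ∩ B).Nonempty

/-
A point `y` in the image of `f` is reached from some point (`y ∈ f x`) and reaches some point (`f y`
is nonempty). Since `f` has open graph, so does each iterate, hence the set of points reachable
from `y` and the set of points from which `y` is reachable are nonempty open sets. Transitivity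
joins the first to the second by a trajectory, and concatenating gives a loop through `y`.
-/

section Reachability

variable {X : Type*} (f : X → Set X)

theorem mem_fIter_one_iff {x y : X} : y ∈ fIter f 1 x ↔ y ∈ f x := by
  simp [fIter]

theorem fIter_add {x y z : X} {m : ℕ} :
    ∀ {n : ℕ}, y ∈ fIter f m x → z ∈ fIter f n y → z ∈ fIter f (m + n) x
  | 0, hy, hz => by rwa [show z = y from hz]
  | n + 1, hy, hz => by
    obtain ⟨c, hc, hzc⟩ := mem_iUnion₂.mp hz
    exact mem_iUnion₂.mpr ⟨c, fIter_add hy hc, hzc⟩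

theorem reach_iff_exists_mem_fIter_succ {x y : X} :
    Reach f x y ↔ ∃ n, y ∈ fIter f (n + 1) x :=
  ⟨fun ⟨n, hn, hy⟩ => ⟨n - 1, by rwa [Nat.sub_add_cancel hn]⟩,
    fun ⟨n, hy⟩ => ⟨n + 1, n.succ_pos, hy⟩⟩

variable {f}

theorem reach_of_mem {x y : X} (h : y ∈ f x) : Reach f x y :=
  ⟨1, le_rfl, (mem_fIter_one_iff f).mpr h⟩

theorem Reach.trans {x y z : X} : Reach f x y → Reach f y z → Reach f x z
  | ⟨m, hm, hy⟩, ⟨n, _, hz⟩ => ⟨m + n, by omega, fIter_add f hy hz⟩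

theorem reach_of_mem_fIterS {A : Set X} {n : ℕ} (hn : 1 ≤ n) {z : X} (hz : z ∈ fIterS f n A) :
    ∃ a ∈ A, Reach f a z := by
  obtain ⟨a, ha, hza⟩ := mem_iUnion₂.mp hz
  exact ⟨a, ha, n, hn, hza⟩

end Reachability

section OpenGraph

variable {X : Type*} [TopologicalSpace X] {f : X → Set X}

theorem isOpen_graph_fIter_succ (hf : IsOpen {p : X × X | p.2 ∈ f p.1}) :
    ∀ n, IsOpen {p : X × X | p.2 ∈ fIter f (n + 1) p.1}
  | 0 => by simpa only [zero_add, mem_fIter_one_iff] using hf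
  | n + 1 => by
    have hslice : ∀ c, IsOpen {a | c ∈ fIter f (n + 1) a} := fun c =>
      (isOpen_graph_fIter_succ hf n).preimage (Continuous.prodMk_left c)
    have hvalue : ∀ c, IsOpen (f c) := fun c => hf.preimage (Continuous.prodMk_right c)
    have : {p : X × X | p.2 ∈ fIter f (n + 1 + 1) p.1} =
        ⋃ c, Prod.fst ⁻¹' {a | c ∈ fIter f (n + 1) a} ∩ Prod.snd ⁻¹' f c := by
      ext p
      change p.2 ∈ ⋃ c ∈ fIter f (n + 1) p.1, f c ↔ _
      simp
    rw [this]
    exact isOpen_iUnion fun c =>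
      ((hslice c).preimage continuous_fst).inter ((hvalue c).preimage continuous_snd)

theorem isOpen_setOf_reach_from (hf : IsOpen {p : X × X | p.2 ∈ f p.1}) (x : X) :
    IsOpen {z | Reach f x z} := by
  simp_rw [reach_iff_exists_mem_fIter_succ, ofPred_exists]
  exact isOpen_iUnion fun n => (isOpen_graph_fIter_succ hf n).preimage (Continuous.prodMk_right x)

theorem isOpen_setOf_reach_to (hf : IsOpen {p : X × X | p.2 ∈ f p.1}) (y : X) :
    IsOpen {z | Reach f z y} := by
  simp_rw [reach_iff_exists_mem_fIter_succ, ofPred_exists]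
  exact isOpen_iUnion fun n => (isOpen_graph_fIter_succ hf n).preimage (Continuous.prodMk_left y)

theorem reach_self_of_svmTransitive (hf : IsOpen {p : X × X | p.2 ∈ f p.1})
    (htrans : SVMTransitive f) {x y w : X} (hxy : Reach f x y) (hyw : Reach f y w) :
    Reach f y y := by
  obtain ⟨n, hn, u, huV, huU⟩ := htrans _ _ (isOpen_setOf_reach_from hf y) ⟨w, hyw⟩
    (isOpen_setOf_reach_to hf y) ⟨x, hxy⟩
  obtain ⟨v, hyv, hvu⟩ := reach_of_mem_fIterS hn huV
  exact (hyv.trans hvu).trans huU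

end OpenGraph

theorem stmt_7_general {X : Type*} [MetricSpace X] (f : X → Set X)
    (hf : IsOpenSVM f) (htrans : SVMTransitive f) :
    (⋃ x : X, f x) ⊆ Omega f := by
  intro y hy
  obtain ⟨x, hxy⟩ := mem_iUnion.mp hy
  obtain ⟨w, hyw⟩ := (hf.2 y).2.nonempty
  exact reach_self_of_svmTransitive hf.1 htrans (reach_of_mem hxy) (reach_of_mem hyw)

theorem stmt_7 {X : Type*} [MetricSpace X] [CompactSpace X] (f : X → Set X)
    (hf : IsOpenSVM f) (htrans : SVMTransitive f) :
    (⋃ x : X, f x) ⊆ Omega f :=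
  stmt_7_general f hf htrans
end

section
/- Let X be a compact connected metric space and f : X → 2^X an open set-valued map. Then f is transitive if and only if f is topologically mixing, i.e., for all nonempty open sets A, B ⊆ X there exists n₀ such that fⁿ(A) ∩ B ≠ ∅ for all n ≥ n₀. -/
open Metric Set

/-!
Call `n` a return time of an open set `U` if `U ⊆ fⁿ(u)` for every `u ∈ U`; return times are
closed under addition, so by the Frobenius coin theorem a set with two return times `k g` and
`(k + 1) g` has every large multiple of `g` as a return time. Since `f` has open graph, every
period of a point `x` is a return time of a neighbourhood of `x`. Transitivity gives a periodic
point; let `g` be the gcd of the periods of `x`, so that some open `U ∋ x` has all large multiples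
of `g` as return times. If `g > 1`, the sets `Y r = ⋃ {fⁿ(U) | n large, n ≡ r mod g}` are
nonempty, have dense union, and `f` maps `Y r` into `Y (r + 1)`. By lower semicontinuity `f` then
also maps `closure (Y r)` into `Y (r + 1)`, so if the `Y r` were pairwise disjoint their closures
would be a partition of the connected space `X` into `g ≥ 2` nonempty closed sets. Hence two of
them meet, and sending the common point back to `U` by transitivity produces a point of `U` with a
period not divisible by `g`, whose period gcd is a proper divisor of `g`. By induction on `g`
some open `U` has all large integers as return times, and routing `A → U → B` gives mixing.
-/

open Filter Function

lemma Nat.eventually_mem_of_setGcd_dvd {S : Set ℕ} (hS : ∀ m ∈ S, ∀ n ∈ S, m + n ∈ S) :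
    ∀ᶠ m in atTop, Nat.setGcd S ∣ m → m ∈ S := by
  obtain ⟨N, hN⟩ := Nat.exists_mem_closure_of_ge S
  have hclosure : ∀ m ∈ AddSubmonoid.closure S, m = 0 ∨ m ∈ S := fun m hm => by
    induction hm using AddSubmonoid.closure_induction with
    | mem m hm => exact Or.inr hm
    | zero => exact Or.inl rfl
    | add a b _ _ ha hb =>
      rcases ha with rfl | ha
      · simpa using hb
      rcases hb with rfl | hb
      · exact Or.inr ha
      · exact Or.inr (hS a ha b hb)
  filter_upwards [eventually_ge_atTop (max N 1)] with m hm hdvd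
  exact (hclosure m (hN m (le_of_max_le_left hm) hdvd)).resolve_left (by omega)

lemma Nat.setGcd_dvd_of_mul_mem_of_succ_mul_mem {S : Set ℕ} {k g : ℕ} (h₁ : k * g ∈ S)
    (h₂ : (k + 1) * g ∈ S) : Nat.setGcd S ∣ g := by
  have h := Nat.setGcd_dvd_of_mem h₂
  rw [add_one_mul] at h
  exact (Nat.dvd_add_right (Nat.setGcd_dvd_of_mem h₁)).1 h

section Iterates

variable {X : Type*} {f : X → Set X}

lemma mem_fIter_zero {x y : X} : y ∈ fIter f 0 x ↔ y = x := Iff.rfl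

lemma mem_fIter_succ {n : ℕ} {x y : X} :
    y ∈ fIter f (n + 1) x ↔ ∃ z ∈ fIter f n x, y ∈ f z := by
  simp [fIter]

lemma fIter_one (x : X) : fIter f 1 x = f x := by
  simp [fIter]

lemma mem_fIter_add {m n : ℕ} {x y z : X} (hy : y ∈ fIter f m x) (hz : z ∈ fIter f n y) :
    z ∈ fIter f (m + n) x := by
  induction n generalizing z with
  | zero => rwa [mem_fIter_zero.1 hz]
  | succ n ih =>
    obtain ⟨w, hw, hzw⟩ := mem_fIter_succ.1 hz
    exact mem_fIter_succ.2 ⟨w, ih hw, hzw⟩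

lemma fIter_nonempty (hne : ∀ x, (f x).Nonempty) (n : ℕ) (x : X) : (fIter f n x).Nonempty := by
  induction n with
  | zero => exact ⟨x, rfl⟩
  | succ n ih =>
    obtain ⟨y, hy⟩ := ih
    obtain ⟨z, hz⟩ := hne y
    exact ⟨z, mem_fIter_succ.2 ⟨y, hy, hz⟩⟩

lemma mem_fIterS {n : ℕ} {A : Set X} {y : X} : y ∈ fIterS f n A ↔ ∃ a ∈ A, y ∈ fIter f n a := by
  simp [fIterS]

def returnTimes (f : X → Set X) (U : Set X) : Set ℕ :=
  {n | ∀ u ∈ U, U ⊆ fIter f n u}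

/-- `returnTimes f {x}` is the set of periods of `x` (with `0`), so this vanishes exactly when `x`
is not periodic. -/
noncomputable def periodGcd (f : X → Set X) (x : X) : ℕ :=
  Nat.setGcd (returnTimes f {x})

lemma mem_returnTimes_singleton {x : X} {n : ℕ} : n ∈ returnTimes f {x} ↔ x ∈ fIter f n x := by
  simp [returnTimes]

lemma add_mem_returnTimes {U : Set X} {m n : ℕ} (hm : m ∈ returnTimes f U)
    (hn : n ∈ returnTimes f U) : m + n ∈ returnTimes f U :=
  fun u hu _ hv => mem_fIter_add (hm u hu hu) (hn u hu hv)

lemma returnTimes_anti {U V : Set X} (h : V ⊆ U) : returnTimes f U ⊆ returnTimes f V :=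
  fun _ hn v hv => h.trans (hn v (h hv))

lemma periodGcd_ne_zero {x : X} {n : ℕ} (hn : n ≠ 0) (hx : x ∈ fIter f n x) :
    periodGcd f x ≠ 0 := fun h =>
  hn (Nat.eq_zero_of_zero_dvd (h ▸ Nat.setGcd_dvd_of_mem (mem_returnTimes_singleton.2 hx)))

end Iterates

section OpenGraph

variable {X : Type*} [TopologicalSpace X] {f : X → Set X}

lemma isOpen_setOf_mem_of_isOpen_graph (hgraph : IsOpen {p : X × X | p.2 ∈ f p.1}) (y : X) :
    IsOpen {x | y ∈ f x} :=
  hgraph.preimage (continuous_id.prodMk continuous_const)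

lemma isOpen_of_isOpen_graph (hgraph : IsOpen {p : X × X | p.2 ∈ f p.1}) (x : X) :
    IsOpen (f x) :=
  hgraph.preimage (continuous_const.prodMk continuous_id)

lemma isOpen_graph_fIter (hgraph : IsOpen {p : X × X | p.2 ∈ f p.1}) {n : ℕ} (hn : n ≠ 0) :
    IsOpen {p : X × X | p.2 ∈ fIter f n p.1} := by
  induction n with
  | zero => exact absurd rfl hn
  | succ n ih =>
    rcases eq_or_ne n 0 with rfl | hn₀
    · simpa [fIter_one] using hgraph
    have hgraph_succ :
        {p : X × X | p.2 ∈ fIter f (n + 1) p.1} = ⋃ z, {x | z ∈ fIter f n x} ×ˢ f z := by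
      ext ⟨x, y⟩
      simp [mem_fIter_succ]
    rw [hgraph_succ]
    exact isOpen_iUnion fun z =>
      (isOpen_setOf_mem_of_isOpen_graph (ih hn₀) z).prod (isOpen_of_isOpen_graph hgraph z)

lemma exists_isOpen_subset_fIter (hgraph : IsOpen {p : X × X | p.2 ∈ f p.1}) {n : ℕ}
    (hn : n ≠ 0) {x y : X} (hy : y ∈ fIter f n x) :
    ∃ V W : Set X, IsOpen V ∧ IsOpen W ∧ x ∈ V ∧ y ∈ W ∧ ∀ v ∈ V, W ⊆ fIter f n v := by
  obtain ⟨V, W, hV, hW, hxV, hyW, hVW⟩ :=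
    isOpen_prod_iff.1 (isOpen_graph_fIter hgraph hn) x y hy
  exact ⟨V, W, hV, hW, hxV, hyW, fun v hv w hw => hVW (mk_mem_prod hv hw)⟩

lemma exists_isOpen_mem_returnTimes (hgraph : IsOpen {p : X × X | p.2 ∈ f p.1}) {n : ℕ}
    (hn : n ≠ 0) {x : X} (hx : n ∈ returnTimes f {x}) :
    ∃ U, IsOpen U ∧ x ∈ U ∧ n ∈ returnTimes f U := by
  obtain ⟨V, W, hV, hW, hxV, hxW, hVW⟩ :=
    exists_isOpen_subset_fIter hgraph hn (mem_returnTimes_singleton.1 hx)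
  exact ⟨V ∩ W, hV.inter hW, ⟨hxV, hxW⟩, fun u hu => inter_subset_right.trans (hVW u hu.1)⟩

lemma exists_isOpen_eventually_mul_periodGcd_mem_returnTimes
    (hgraph : IsOpen {p : X × X | p.2 ∈ f p.1}) {x : X} (hx : periodGcd f x ≠ 0) :
    ∃ U, IsOpen U ∧ x ∈ U ∧ ∀ᶠ k in atTop, k * periodGcd f x ∈ returnTimes f U := by
  set g := periodGcd f x
  have hmul_le : ∀ k, k ≤ k * g := fun k => Nat.le_mul_of_pos_right k (Nat.pos_of_ne_zero hx)
  obtain ⟨K, hK⟩ := eventually_atTop.1 (Nat.eventually_mem_of_setGcd_dvd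
    (S := returnTimes f {x}) fun _ hm _ hn => add_mem_returnTimes hm hn)
  have hnbhd : ∀ k, K < k → ∃ U, IsOpen U ∧ x ∈ U ∧ k * g ∈ returnTimes f U := fun k hk =>
    exists_isOpen_mem_returnTimes hgraph (mul_ne_zero (by omega) hx)
      (hK _ (hk.le.trans (hmul_le k)) (dvd_mul_left g k))
  obtain ⟨U₁, hU₁, hxU₁, h₁⟩ := hnbhd (K + 1) (by omega)
  obtain ⟨U₂, hU₂, hxU₂, h₂⟩ := hnbhd (K + 1 + 1) (by omega)
  have h₁' := returnTimes_anti (inter_subset_left (t := U₂)) h₁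
  have h₂' := returnTimes_anti (inter_subset_right (s := U₁)) h₂
  obtain ⟨N, hN⟩ := eventually_atTop.1 (Nat.eventually_mem_of_setGcd_dvd
    (S := returnTimes f (U₁ ∩ U₂)) fun _ hm _ hn => add_mem_returnTimes hm hn)
  exact ⟨U₁ ∩ U₂, hU₁.inter hU₂, ⟨hxU₁, hxU₂⟩, eventually_atTop.2 ⟨N, fun k hk =>
    hN _ (hk.trans (hmul_le k)) ((Nat.setGcd_dvd_of_mul_mem_of_succ_mul_mem h₁' h₂').mul_left k)⟩⟩

lemma eq_of_pairwise_disjoint_closed_cover [PreconnectedSpace X] {ι : Type*} [Finite ι]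
    {C : ι → Set X} (hC : ∀ i, IsClosed (C i)) (hcover : ⋃ i, C i = univ)
    (hdisj : Pairwise (Disjoint on C)) {i j : ι} (hi : (C i).Nonempty) (hj : (C j).Nonempty) :
    i = j := by
  by_contra hij
  have hcompl : (C i)ᶜ = ⋃ k, ⋃ (_ : k ≠ i), C k := by
    ext x
    simp only [mem_compl_iff, mem_iUnion]
    refine ⟨fun hx => ?_, fun ⟨k, hki, hxk⟩ hxi => disjoint_left.1 (hdisj hki) hxk hxi⟩
    obtain ⟨k, hxk⟩ := mem_iUnion.1 (hcover ▸ mem_univ x)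
    exact ⟨k, fun hki => hx (hki ▸ hxk), hxk⟩
  have hclopen : IsClopen (C i) := ⟨hC i, by
    rw [← isClosed_compl_iff, hcompl]
    exact isClosed_iUnion_of_finite fun k => isClosed_iUnion_of_finite fun _ => hC k⟩
  have hdisj_ij : Disjoint (C i) (C j) := hdisj hij
  rw [hclopen.eq_univ hi, univ_disjoint] at hdisj_ij
  exact hj.ne_empty hdisj_ij

lemma eq_of_pairwise_disjoint_of_mapsTo [PreconnectedSpace X] {ι : Type*} [Finite ι]
    (hgraph : IsOpen {p : X × X | p.2 ∈ f p.1}) (hne : ∀ x, (f x).Nonempty) {Y : ι → Set X}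
    {σ : ι → ι} (hσ : Injective σ) (hdense : Dense (⋃ i, Y i))
    (hmaps : ∀ i, ∀ y ∈ Y i, f y ⊆ Y (σ i)) (hdisj : Pairwise (Disjoint on Y)) {i j : ι}
    (hi : (Y i).Nonempty) (hj : (Y j).Nonempty) : i = j := by
  have hmaps_closure : ∀ i, ∀ z ∈ closure (Y i), f z ⊆ Y (σ i) := fun i z hz w hw => by
    obtain ⟨y, hwy, hy⟩ := mem_closure_iff.1 hz _ (isOpen_setOf_mem_of_isOpen_graph hgraph w) hw
    exact hmaps i y hy hwy
  refine eq_of_pairwise_disjoint_closed_cover (C := fun i => closure (Y i))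
    (fun _ => isClosed_closure) ?_ ?_ hi.closure hj.closure
  · rw [← closure_iUnion_of_finite, hdense.closure_eq]
  · intro k l hkl
    refine disjoint_left.2 fun z hzk hzl => ?_
    obtain ⟨w, hw⟩ := hne z
    exact disjoint_left.1 (hdisj (hσ.ne hkl)) (hmaps_closure k z hzk hw)
      (hmaps_closure l z hzl hw)

end OpenGraph

section Transitive

variable {X : Type*} [TopologicalSpace X] {f : X → Set X}

lemma SVMTransitive.exists_mem_fIter (ht : SVMTransitive f) {A B : Set X} (hA : IsOpen A)
    (hAne : A.Nonempty) (hB : IsOpen B) (hBne : B.Nonempty) :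
    ∃ n, n ≠ 0 ∧ ∃ a ∈ A, ∃ b ∈ B, b ∈ fIter f n a := by
  obtain ⟨n, hn, b, hbA, hbB⟩ := ht A B hA hAne hB hBne
  obtain ⟨a, ha, hb⟩ := mem_fIterS.1 hbA
  exact ⟨n, by omega, a, ha, b, hbB, hb⟩

lemma SVMTransitive.exists_mem_fIter_self [Nonempty X] (ht : SVMTransitive f)
    (hgraph : IsOpen {p : X × X | p.2 ∈ f p.1}) : ∃ x n, n ≠ 0 ∧ x ∈ fIter f n x := by
  obtain ⟨n, hn, a, -, b, -, hab⟩ :=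
    ht.exists_mem_fIter isOpen_univ univ_nonempty isOpen_univ univ_nonempty
  obtain ⟨V, W, hV, hW, haV, hbW, hVW⟩ := exists_isOpen_subset_fIter hgraph hn hab
  obtain ⟨m, -, b', hb', a', ha', hba⟩ := ht.exists_mem_fIter hW ⟨b, hbW⟩ hV ⟨a, haV⟩
  exact ⟨b', m + n, by omega, mem_fIter_add hba (hVW a' ha' hb')⟩

lemma SVMTransitive.eventually_fIterS_inter_nonempty (ht : SVMTransitive f) {U : Set X}
    (hUo : IsOpen U) (hUne : U.Nonempty) (hU : ∀ᶠ n in atTop, n ∈ returnTimes f U)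
    {A B : Set X} (hA : IsOpen A) (hAne : A.Nonempty) (hB : IsOpen B) (hBne : B.Nonempty) :
    ∀ᶠ n in atTop, (fIterS f n A ∩ B).Nonempty := by
  obtain ⟨n₁, -, a, ha, w, hw, haw⟩ := ht.exists_mem_fIter hA hAne hUo hUne
  obtain ⟨n₂, -, u, hu, b, hb, hub⟩ := ht.exists_mem_fIter hUo hUne hB hBne
  obtain ⟨N, hN⟩ := eventually_atTop.1 hU
  filter_upwards [eventually_ge_atTop (n₁ + N + n₂)] with n hn
  obtain ⟨m, rfl⟩ : ∃ m, n = n₁ + (N + m) + n₂ := ⟨n - n₁ - N - n₂, by omega⟩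
  exact ⟨b, mem_fIterS.2 ⟨a, ha,
    mem_fIter_add (mem_fIter_add haw (hN _ le_self_add w hw hu)) hub⟩, hb⟩

end Transitive

section CyclicPieces

variable {X : Type*} {f : X → Set X} {U : Set X} {N g : ℕ}

def cyclicPiece (f : X → Set X) (U : Set X) (N g : ℕ) (r : ZMod g) : Set X :=
  {z | ∃ n, N ≤ n ∧ (n : ZMod g) = r ∧ z ∈ fIterS f n U}

lemma cyclicPiece_nonempty [NeZero g] (hne : ∀ x, (f x).Nonempty) (hU : U.Nonempty)
    (r : ZMod g) : (cyclicPiece f U N g r).Nonempty := by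
  obtain ⟨u, hu⟩ := hU
  obtain ⟨z, hz⟩ := fIter_nonempty hne (N + (r - N).val) u
  refine ⟨z, N + (r - N).val, le_self_add, ?_, mem_fIterS.2 ⟨u, hu, hz⟩⟩
  push_cast [ZMod.natCast_zmod_val]
  ring

lemma cyclicPiece_mapsTo {r : ZMod g} {z : X} (hz : z ∈ cyclicPiece f U N g r) :
    f z ⊆ cyclicPiece f U N g (r + 1) := by
  obtain ⟨n, hn, rfl, hz⟩ := hz
  obtain ⟨u, hu, hzu⟩ := mem_fIterS.1 hz
  exact fun w hw => ⟨n + 1, by omega, by push_cast; rfl,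
    mem_fIterS.2 ⟨u, hu, mem_fIter_succ.2 ⟨z, hzu, hw⟩⟩⟩

variable [TopologicalSpace X]

lemma dense_iUnion_cyclicPiece (ht : SVMTransitive f) (hUo : IsOpen U) (hUne : U.Nonempty)
    (hN : N ∈ returnTimes f U) : Dense (⋃ r, cyclicPiece f U N g r) := by
  refine dense_iff_inter_open.2 fun B hB hBne => ?_
  obtain ⟨m, -, u, hu, b, hb, hbu⟩ := ht.exists_mem_fIter hUo hUne hB hBne
  exact ⟨b, hb, mem_iUnion.2
    ⟨_, N + m, le_self_add, rfl, mem_fIterS.2 ⟨u, hu, mem_fIter_add (hN u hu hu) hbu⟩⟩⟩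

/-- Two pieces meet in some `z ∈ fⁿ(u) ∩ fᵐ(u')`; returning from near `z` to some `v ∈ U` in `t`
steps gives `v` the periods `N + n + t` and `N + m + t`, so `n ≡ m [MOD g]` if `g` divides both. -/
lemma pairwise_disjoint_cyclicPiece (hgraph : IsOpen {p : X × X | p.2 ∈ f p.1})
    (ht : SVMTransitive f) (hUo : IsOpen U) (hN₀ : N ≠ 0) (hN : N ∈ returnTimes f U)
    (hdvd : ∀ v ∈ U, ∀ p ∈ returnTimes f {v}, g ∣ p) :
    Pairwise (Disjoint on cyclicPiece f U N g) := by
  intro r s hrs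
  refine disjoint_left.2 ?_
  rintro z ⟨n, hn, rfl, hz⟩ ⟨m, hm, rfl, hz'⟩
  obtain ⟨u, hu, hzu⟩ := mem_fIterS.1 hz
  obtain ⟨u', hu', hzu'⟩ := mem_fIterS.1 hz'
  have hWo : IsOpen (fIter f n u ∩ fIter f m u') :=
    (isOpen_of_isOpen_graph (isOpen_graph_fIter hgraph (by omega)) u).inter
      (isOpen_of_isOpen_graph (isOpen_graph_fIter hgraph (by omega)) u')
  obtain ⟨t, -, w, ⟨hwn, hwm⟩, v, hv, hvw⟩ := ht.exists_mem_fIter hWo ⟨z, hzu, hzu'⟩ hUo ⟨u, hu⟩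
  have hperiod : ∀ {k : ℕ} {y : X}, y ∈ U → w ∈ fIter f k y → ((N + k + t : ℕ) : ZMod g) = 0 :=
    fun hy hwy => (ZMod.natCast_eq_zero_iff _ _).2 <| hdvd v hv _ <|
      mem_returnTimes_singleton.2 (mem_fIter_add (mem_fIter_add (hN v hv hy) hwy) hvw)
  have hn' := hperiod hu hwn
  have hm' := hperiod hu' hwm
  push_cast at hn' hm'
  exact hrs (by linear_combination hn' - hm')

lemma exists_mem_returnTimes_not_dvd [PreconnectedSpace X]
    (hgraph : IsOpen {p : X × X | p.2 ∈ f p.1}) (hne : ∀ x, (f x).Nonempty)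
    (ht : SVMTransitive f) (hUo : IsOpen U) (hUne : U.Nonempty) (hg : 1 < g)
    (hU : ∀ᶠ k in atTop, k * g ∈ returnTimes f U) :
    ∃ v ∈ U, ∃ p ∈ returnTimes f {v}, ¬ g ∣ p := by
  have : Fact (1 < g) := ⟨hg⟩
  obtain ⟨k, hk, hk₀⟩ := (hU.and (eventually_ne_atTop 0)).exists
  have hN₀ : k * g ≠ 0 := mul_ne_zero hk₀ (by omega)
  by_contra! hdvd
  exact zero_ne_one <| eq_of_pairwise_disjoint_of_mapsTo hgraph hne (add_left_injective 1)
    (dense_iUnion_cyclicPiece ht hUo hUne hk) (fun _ _ => cyclicPiece_mapsTo)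
    (pairwise_disjoint_cyclicPiece hgraph ht hUo hN₀ hk hdvd)
    (cyclicPiece_nonempty hne hUne 0) (cyclicPiece_nonempty hne hUne 1)

end CyclicPieces

lemma exists_isOpen_eventually_mem_returnTimes {X : Type*} [TopologicalSpace X]
    [PreconnectedSpace X] {f : X → Set X} (hgraph : IsOpen {p : X × X | p.2 ∈ f p.1})
    (hne : ∀ x, (f x).Nonempty) (ht : SVMTransitive f) {g : ℕ} (hg : g ≠ 0) {x : X}
    (hx : periodGcd f x = g) :
    ∃ U, IsOpen U ∧ U.Nonempty ∧ ∀ᶠ n in atTop, n ∈ returnTimes f U := by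
  induction g using Nat.strong_induction_on generalizing x with
  | _ g ih =>
  subst hx
  obtain ⟨U, hUo, hxU, hU⟩ := exists_isOpen_eventually_mul_periodGcd_mem_returnTimes hgraph hg
  rcases (Nat.one_le_iff_ne_zero.2 hg).eq_or_lt with h₁ | h₁
  · exact ⟨U, hUo, ⟨x, hxU⟩, by simpa [← h₁] using hU⟩
  obtain ⟨v, hvU, p, hp, hgp⟩ := exists_mem_returnTimes_not_dvd hgraph hne ht hUo ⟨x, hxU⟩ h₁ hU
  have hv : ∀ᶠ k in atTop, k * periodGcd f x ∈ returnTimes f {v} :=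
    hU.mono fun _ hk => returnTimes_anti (singleton_subset_iff.2 hvU) hk
  obtain ⟨k, hk, hk₁⟩ := (hv.and ((tendsto_add_atTop_nat 1).eventually hv)).exists
  have hdvd : periodGcd f v ∣ periodGcd f x := Nat.setGcd_dvd_of_mul_mem_of_succ_mul_mem hk hk₁
  have hlt : periodGcd f v < periodGcd f x :=
    (Nat.le_of_dvd (Nat.pos_of_ne_zero hg) hdvd).lt_of_ne fun h =>
      hgp (h ▸ Nat.setGcd_dvd_of_mem hp)
  exact ih _ hlt (fun h => hg (Nat.eq_zero_of_zero_dvd (h ▸ hdvd))) rfl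

theorem stmt_13_general {X : Type*} [MetricSpace X] [ConnectedSpace X]
    (f : X → Set X) (hf : IsOpenSVM f) :
    SVMTransitive f ↔
      (∀ A B : Set X, IsOpen A → A.Nonempty → IsOpen B → B.Nonempty →
        ∃ n₀, ∀ n ≥ n₀, (fIterS f n A ∩ B).Nonempty) := by
  have hne : ∀ x, (f x).Nonempty := fun x => (hf.2 x).2.nonempty
  refine ⟨fun ht A B hA hAne hB hBne => ?_, fun hmix A B hA hAne hB hBne => ?_⟩
  · have : Nonempty X := ⟨hAne.some⟩
    obtain ⟨x, n, hn, hx⟩ := ht.exists_mem_fIter_self hf.1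
    obtain ⟨U, hUo, hUne, hU⟩ :=
      exists_isOpen_eventually_mem_returnTimes hf.1 hne ht (periodGcd_ne_zero hn hx) rfl
    exact eventually_atTop.1 (ht.eventually_fIterS_inter_nonempty hUo hUne hU hA hAne hB hBne)
  · obtain ⟨n₀, h⟩ := hmix A B hA hAne hB hBne
    exact ⟨n₀ + 1, by omega, h _ (by omega)⟩

theorem stmt_13 {X : Type*} [MetricSpace X] [CompactSpace X] [ConnectedSpace X]
    (f : X → Set X) (hf : IsOpenSVM f) :
    SVMTransitive f ↔
      (∀ A B : Set X, IsOpen A → A.Nonempty → IsOpen B → B.Nonempty →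
        ∃ n₀, ∀ n ≥ n₀, (fIterS f n A ∩ B).Nonempty) :=
  stmt_13_general f hf
end

section
/- Let X be a compact connected metric space without isolated points and f : X → 2^X an open set-valued map. Then the topological entropy of f is infinite: for every m ∈ ℕ there exists ε₀ > 0 such that for all 0 < ε < ε₀ and all n ∈ ℕ, the maximal cardinality s_n(ε) of an (n,ε)-separated set of orbit segments of f satisfies s_n(ε) ≥ mⁿ; hence lim_{ε → 0} limsup_{n → ∞} (1/n) log s_n(ε) = ∞. -/
/-!
Since the graph of `f` is open, finitely many points of `f x` stay in `f x'` for `x'` near `x`;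
as `f x` is a nonempty open set in a space without isolated points, it contains `m` distinct
points, and compactness of `X` makes their separation uniform: for small `ε` every `f x`
contains `m` points that are pairwise `ε`-apart. Choosing one of these `m` successors at every
step turns each word of length `n` over `m` letters into an orbit segment, and two different
words give segments that are `ε`-apart at the first letter where the words differ.
-/

open Metric Set

/-- A tuple `(u 0, …, u (n-1))` is an orbit segment of the set-valued map `f`. -/
def IsOrbitSeg {X : Type*} (f : X → Set X) (n : ℕ) (u : Fin n → X) : Prop :=
  ∀ i : ℕ, ∀ h : i + 1 < n, u ⟨i + 1, h⟩ ∈ f (u ⟨i, Nat.lt_of_succ_lt h⟩)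

open Filter Topology

theorem CompactSpace.eventually_forall_of_forall_eventually_prod {α X : Type*}
    [TopologicalSpace X] [CompactSpace X] {l : Filter α} {P : α → X → Prop}
    (hP : ∀ x, ∀ᶠ p in l ×ˢ 𝓝 x, P p.1 p.2) : ∀ᶠ a in l, ∀ x, P a x := by
  have h : ∀ᶠ p in l ×ˢ 𝓝ˢ univ, P p.1 p.2 :=
    isCompact_univ.mem_prod_nhdsSet_of_forall fun x _ => hP x
  rw [nhdsSet_univ] at h
  exact h.curry.mono fun _ => eventually_top.1

theorem eventually_le_dist_of_injective {X ι : Type*} [MetricSpace X] [Finite ι]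
    {y : ι → X} (hy : Function.Injective y) :
    ∀ᶠ δ in 𝓝[>] (0 : ℝ), ∀ j k, j ≠ k → δ ≤ dist (y j) (y k) := by
  refine eventually_all.2 fun j => eventually_all.2 fun k => ?_
  rcases eq_or_ne j k with rfl | hjk
  · exact Eventually.of_forall fun _ h => absurd rfl h
  · have hpos : 0 < dist (y j) (y k) := dist_pos.2 (hy.ne hjk)
    exact ((eventually_le_nhds hpos).filter_mono nhdsWithin_le_nhds).mono fun _ h _ => h

theorem Set.Infinite.exists_injective_fin {α : Type*} {s : Set α} (hs : s.Infinite) (M : ℕ) :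
    ∃ y : Fin M → α, Function.Injective y ∧ ∀ j, y j ∈ s :=
  let e := Fin.valEmbedding.trans (hs.natEmbedding s)
  ⟨fun j => e j, Subtype.val_injective.comp e.injective, fun j => (e j).2⟩

/-- `itinerary c n x w` follows the word `w`: its `i`-th point is `c p (w i)`, `p` the previous
point (`x` for `i = 0`). -/
def itinerary {X ι : Type*} (c : X → ι → X) :
    (n : ℕ) → X → (Fin n → ι) → Fin n → X
  | 0, _, _ => Fin.elim0
  | n + 1, x, w => Fin.cons (c x (w 0)) (itinerary c n (c x (w 0)) (Fin.tail w))

theorem isOrbitSeg_cons {X : Type*} {f : X → Set X} {n : ℕ} {a : X} {u : Fin n → X} :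
    IsOrbitSeg f (n + 1) (Fin.cons a u) ↔ (∀ h : 0 < n, u ⟨0, h⟩ ∈ f a) ∧ IsOrbitSeg f n u := by
  constructor
  · intro hu
    exact ⟨fun h => hu 0 (Nat.succ_lt_succ h), fun i h => hu (i + 1) (Nat.succ_lt_succ h)⟩
  · rintro ⟨h0, hu⟩ (_ | i) h
    · exact h0 (by omega)
    · exact hu i (by omega)

theorem isOrbitSeg_itinerary {X ι : Type*} {f : X → Set X} {c : X → ι → X}
    (hc : ∀ x j, c x j ∈ f x) : ∀ n x w, IsOrbitSeg f n (itinerary c n x w)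
  | 0, _, _ => fun _ h => absurd h (by omega)
  | n + 1, x, w => isOrbitSeg_cons.2 ⟨fun h => by
      obtain ⟨n, rfl⟩ := Nat.exists_eq_add_of_lt h
      exact hc _ _, isOrbitSeg_itinerary hc n _ _⟩

theorem exists_le_dist_itinerary {X ι : Type*} [PseudoMetricSpace X] {c : X → ι → X} {δ : ℝ}
    (hc : ∀ x j k, j ≠ k → δ ≤ dist (c x j) (c x k)) :
    ∀ n x (w w' : Fin n → ι), w ≠ w' →
      ∃ i, δ ≤ dist (itinerary c n x w i) (itinerary c n x w' i)
  | 0, _, w, w', hne => absurd (Subsingleton.elim w w') hne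
  | n + 1, x, w, w', hne => by
    by_cases h0 : w 0 = w' 0
    · have htail : Fin.tail w ≠ Fin.tail w' := fun h => hne (by
        rw [← Fin.cons_self_tail w, ← Fin.cons_self_tail w', h0, h])
      obtain ⟨i, hi⟩ := exists_le_dist_itinerary hc n (c x (w 0)) _ _ htail
      refine ⟨i.succ, ?_⟩
      simpa [itinerary, h0] using hi
    · exact ⟨0, by simpa [itinerary] using hc x _ _ h0⟩

theorem itinerary_injective {X ι : Type*} [PseudoMetricSpace X] {c : X → ι → X} {δ : ℝ}
    (hδ : 0 < δ) (hc : ∀ x j k, j ≠ k → δ ≤ dist (c x j) (c x k)) (n : ℕ) (x : X) :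
    Function.Injective (itinerary c n x) := fun w w' h => by
  by_contra hne
  obtain ⟨i, hi⟩ := exists_le_dist_itinerary hc n x w w' hne
  rw [h, dist_self] at hi
  exact hi.not_gt hδ

theorem eventually_forall_exists_separated_mem {X : Type*} [MetricSpace X] [CompactSpace X]
    (hiso : ∀ x : X, (𝓝[≠] x).NeBot) {f : X → Set X}
    (hgraph : IsOpen {p : X × X | p.2 ∈ f p.1}) (hopen : ∀ x, IsOpen (f x))
    (hne : ∀ x, (f x).Nonempty) (M : ℕ) :
    ∀ᶠ δ in 𝓝[>] (0 : ℝ), ∀ x, ∃ y : Fin M → X,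
      (∀ j, y j ∈ f x) ∧ ∀ j k, j ≠ k → δ ≤ dist (y j) (y k) := by
  refine CompactSpace.eventually_forall_of_forall_eventually_prod fun x => ?_
  obtain ⟨z, hz⟩ := hne x
  have := hiso z
  obtain ⟨y, hy_inj, hy_mem⟩ :=
    (infinite_of_mem_nhds z ((hopen x).mem_nhds hz)).exists_injective_fin M
  have hnear : ∀ᶠ x' in 𝓝 x, ∀ j, y j ∈ f x' := eventually_all.2 fun j =>
    (hgraph.preimage (continuous_id.prodMk continuous_const)).mem_nhds (hy_mem j)
  exact ((eventually_le_dist_of_injective hy_inj).prod_mk hnear).mono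
    fun _ hp => ⟨y, hp.2, hp.1⟩

theorem stmt_19 {X : Type*} [MetricSpace X] [CompactSpace X] [ConnectedSpace X]
    (hiso : ∀ x : X, (nhdsWithin x {x}ᶜ).NeBot)
    (f : X → Set X)
    (hgraph : IsOpen {p : X × X | p.2 ∈ f p.1})
    (hval : ∀ x, IsOpen (f x) ∧ IsConnected (f x)) :
    ∀ m : ℕ, ∃ ε₀ > 0, ∀ ε : ℝ, 0 < ε → ε < ε₀ → ∀ n : ℕ,
      ∃ E : Finset (Fin n → X),
        (∀ u ∈ E, IsOrbitSeg f n u) ∧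
        (∀ u ∈ E, ∀ v ∈ E, u ≠ v → ∃ i : Fin n, ε ≤ dist (u i) (v i)) ∧
        m ^ n ≤ E.card := by
  classical
  intro m
  obtain ⟨ε₀, hε₀, hsep⟩ := mem_nhdsGT_iff_exists_Ioo_subset.1
    (eventually_forall_exists_separated_mem hiso hgraph (fun x => (hval x).1)
      (fun x => (hval x).2.nonempty) m)
  refine ⟨ε₀, hε₀, fun ε hε hεε₀ n => ?_⟩
  choose c hcf hcsep using hsep ⟨hε, hεε₀⟩
  obtain ⟨x₀⟩ := ConnectedSpace.toNonempty (α := X)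
  refine ⟨Finset.univ.image (itinerary c n x₀), ?_, ?_, ?_⟩
  · simp only [Finset.mem_image]
    rintro _ ⟨w, -, rfl⟩
    exact isOrbitSeg_itinerary hcf n x₀ w
  · simp only [Finset.mem_image]
    rintro _ ⟨w, -, rfl⟩ _ ⟨w', -, rfl⟩ hne
    exact exists_le_dist_itinerary hcsep n x₀ w w' (ne_of_apply_ne _ hne)
  · rw [Finset.card_image_of_injective _ (itinerary_injective hε hcsep n x₀)]
    simp
end
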